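/- arXiv:2208.05885 — 5 statements merged into one kernel-verified Lean document; each statement's English description precedes it below -/
import Mathlib

section
/- Suppose f*(X,Z) and f(X,Z) are square-integrable and Var(f*(X,Z)) > 0. Then ℓ(f) ≤ ℓ(f*) = S = u(f*) ≤ u(f); in particular, for any surrogate f the total-order sensitivity index S lies in the interval [ℓ(f), u(f)]. -/
open MeasureTheory ProbabilityTheory

section Aux

variable {α : Type*} {m m0 : MeasurableSpace α} {μ : @Measure α m0} [IsFiniteMeasure μ]

lemma fg_integral_sq_sub_eq_norm_sq {af bf : α → ℝ} (a b : Lp ℝ 2 μ)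
    (ha : af =ᵐ[μ] a) (hb : bf =ᵐ[μ] b) :
    ∫ ω, (af ω - bf ω) ^ 2 ∂μ = ‖a - b‖ ^ 2 := by
  have h : ∫ ω, (af ω - bf ω) ^ 2 ∂μ = ∫ ω, ((a - b) ω) * ((a - b) ω) ∂μ := by
    refine integral_congr_ae ?_
    filter_upwards [ha, hb, Lp.coeFn_sub a b] with ω h1 h2 h3
    rw [h3]
    simp [h1, h2, sq]
  rw [h, ← real_inner_self_eq_norm_sq]
  rw [L2.inner_def]
  simp [RCLike.inner_apply, sq]

lemma fg_condexp_ae_eq_condExpL2 (hm : m ≤ m0) {F : α → ℝ} (hF : MemLp F 2 μ) :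
    μ[F|m] =ᵐ[μ] (condExpL2 ℝ ℝ hm (hF.toLp F) : α → ℝ) := by
  haveI : SigmaFinite (μ.trim hm) := inferInstance
  refine (ae_eq_condExp_of_forall_setIntegral_eq hm (hF.integrable one_le_two)
    (fun s _ hs => integrableOn_condExpL2_of_measure_ne_top hm hs.ne _)
    (fun s hs hμs => ?_) (aestronglyMeasurable_condExpL2 hm _)).symm
  rw [integral_condExpL2_eq hm _ hs hμs.ne]
  exact setIntegral_congr_ae (hm s hs) ((hF.coeFn_toLp).mono fun ω hω _ => hω)

end Aux

section Aux2
set_option linter.unusedSectionVars false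

variable {α : Type*} {m m0 : MeasurableSpace α} {μ : @Measure α m0} [IsFiniteMeasure μ]

lemma fg_pythagoras (hm : m ≤ m0) {F G : α → ℝ} (hF : MemLp F 2 μ) (hG : MemLp G 2 μ) :
    ∫ ω, (F ω - (μ[G|m]) ω) ^ 2 ∂μ
      = ∫ ω, (F ω - (μ[F|m]) ω) ^ 2 ∂μ + ∫ ω, ((μ[F|m]) ω - (μ[G|m]) ω) ^ 2 ∂μ
    ∧ ∫ ω, ((μ[F|m]) ω - (μ[G|m]) ω) ^ 2 ∂μ ≤ ∫ ω, (F ω - G ω) ^ 2 ∂μ := by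
  set Fp : Lp ℝ 2 μ := hF.toLp F with hFp
  set Gp : Lp ℝ 2 μ := hG.toLp G with hGp
  set PF : Lp ℝ 2 μ := (condExpL2 ℝ ℝ hm Fp : Lp ℝ 2 μ) with hPF
  set PG : Lp ℝ 2 μ := (condExpL2 ℝ ℝ hm Gp : Lp ℝ 2 μ) with hPG
  have haF : F =ᵐ[μ] Fp := (hF.coeFn_toLp).symm
  have haG : G =ᵐ[μ] Gp := (hG.coeFn_toLp).symm
  have hcF : μ[F|m] =ᵐ[μ] PF := fg_condexp_ae_eq_condExpL2 hm hF
  have hcG : μ[G|m] =ᵐ[μ] PG := fg_condexp_ae_eq_condExpL2 hm hG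
  have eQ : ∫ ω, (F ω - (μ[G|m]) ω) ^ 2 ∂μ = ‖Fp - PG‖ ^ 2 :=
    fg_integral_sq_sub_eq_norm_sq _ _ haF hcG
  have eP : ∫ ω, (F ω - (μ[F|m]) ω) ^ 2 ∂μ = ‖Fp - PF‖ ^ 2 :=
    fg_integral_sq_sub_eq_norm_sq _ _ haF hcF
  have eT : ∫ ω, ((μ[F|m]) ω - (μ[G|m]) ω) ^ 2 ∂μ = ‖PF - PG‖ ^ 2 :=
    fg_integral_sq_sub_eq_norm_sq _ _ hcF hcG
  have eR : ∫ ω, (F ω - G ω) ^ 2 ∂μ = ‖Fp - Gp‖ ^ 2 :=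
    fg_integral_sq_sub_eq_norm_sq _ _ haF haG
  constructor
  · rw [eQ, eP, eT]
    have hw : AEStronglyMeasurable[m] (⇑(PF - PG)) μ :=
      AEStronglyMeasurable.congr
        ((aestronglyMeasurable_condExpL2 hm Fp).sub (aestronglyMeasurable_condExpL2 hm Gp))
        (Lp.coeFn_sub PF PG).symm
    have hinner : (inner ℝ (Fp - PF) (PF - PG) : ℝ) = 0 := by
      rw [inner_sub_left, inner_condExpL2_eq_inner_fun hm Fp (PF - PG) hw, sub_self]
    have hdecomp : Fp - PG = (Fp - PF) + (PF - PG) := by abel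
    rw [hdecomp, @norm_add_sq_real, hinner]
    ring
  · rw [eT, eR]
    have h1 : ((condExpL2 ℝ ℝ hm (Fp - Gp) : Lp ℝ 2 μ)) = PF - PG := by
      rw [map_sub]; rfl
    have h2 : ‖PF - PG‖ ≤ ‖Fp - Gp‖ := by
      rw [← h1]; exact norm_condExpL2_coe_le hm _
    exact pow_le_pow_left₀ (norm_nonneg _) h2 2

end Aux2

/-- **Floodgate bounds (Lemma 1).** If `f*(X,Z)` and `f(X,Z)` are square-integrable and
`Var(f*(X,Z)) > 0`, then `ℓ(f) ≤ ℓ(f*) = S = u(f*) ≤ u(f)`, where `S` is the total-order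
sensitivity index of the input `X` for the model `f*`, and `u`, `ℓ` are the floodgate upper-
and lower-bound functionals. -/
theorem floodgate_bounds
    {Ω : Type*} [MeasurableSpace Ω] (μ : Measure Ω) [IsProbabilityMeasure μ]
    {m : ℕ} (X : Ω → ℝ) (Z : Ω → (Fin m → ℝ)) (hX : Measurable X) (hZ : Measurable Z)
    (fstar f : ℝ → (Fin m → ℝ) → ℝ)
    (hfstar : Measurable (Function.uncurry fstar)) (hf : Measurable (Function.uncurry f))
    (hfstarL2 : MemLp (fun ω => fstar (X ω) (Z ω)) 2 μ)
    (hfL2 : MemLp (fun ω => f (X ω) (Z ω)) 2 μ)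
    (hvar : 0 < variance (fun ω => fstar (X ω) (Z ω)) μ)
    (u l : (ℝ → (Fin m → ℝ) → ℝ) → ℝ) (S : ℝ)
    (hu : ∀ g : ℝ → (Fin m → ℝ) → ℝ,
      u g = (∫ ω, (fstar (X ω) (Z ω)
          - (μ[fun ω' => g (X ω') (Z ω') | MeasurableSpace.comap Z inferInstance]) ω) ^ 2 ∂μ)
        / variance (fun ω => fstar (X ω) (Z ω)) μ)
    (hl : ∀ g : ℝ → (Fin m → ℝ) → ℝ,
      l g = u g - (∫ ω, (fstar (X ω) (Z ω) - g (X ω) (Z ω)) ^ 2 ∂μ)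
        / variance (fun ω => fstar (X ω) (Z ω)) μ)
    (hS : S = (∫ ω, (fstar (X ω) (Z ω)
          - (μ[fun ω' => fstar (X ω') (Z ω') | MeasurableSpace.comap Z inferInstance]) ω) ^ 2 ∂μ)
        / variance (fun ω => fstar (X ω) (Z ω)) μ) :
    l f ≤ l fstar ∧ l fstar = S ∧ S = u fstar ∧ u fstar ≤ u f := by
  have hm : MeasurableSpace.comap Z inferInstance ≤ (inferInstance : MeasurableSpace Ω) :=
    hZ.comap_le
  set m' := MeasurableSpace.comap Z inferInstance with hm'
  set F : Ω → ℝ := fun ω => fstar (X ω) (Z ω) with hF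
  set G : Ω → ℝ := fun ω => f (X ω) (Z ω) with hG
  set V : ℝ := variance F μ with hV
  obtain ⟨hpy, hTR⟩ := fg_pythagoras (μ := μ) hm hfstarL2 hfL2
  set P : ℝ := ∫ ω, (F ω - (μ[F|m']) ω) ^ 2 ∂μ with hP
  set Q : ℝ := ∫ ω, (F ω - (μ[G|m']) ω) ^ 2 ∂μ with hQ
  set T : ℝ := ∫ ω, ((μ[F|m']) ω - (μ[G|m']) ω) ^ 2 ∂μ with hT
  set R : ℝ := ∫ ω, (F ω - G ω) ^ 2 ∂μ with hR
  have hT0 : 0 ≤ T := integral_nonneg fun ω => sq_nonneg _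
  have hzero : ∫ ω, (F ω - F ω) ^ 2 ∂μ = 0 := by simp
  have huf : u f = Q / V := hu f
  have hufs : u fstar = P / V := hu fstar
  have hlf : l f = Q / V - R / V := by rw [hl f, huf]
  have hlfs : l fstar = P / V := by rw [hl fstar, hufs, hzero]; simp
  have hSP : S = P / V := hS
  refine ⟨?_, by rw [hlfs, hSP], by rw [hSP, hufs], ?_⟩
  · rw [hlf, hlfs]
    have h1 : T / V ≤ R / V := (div_le_div_iff_of_pos_right hvar).mpr hTR
    have h2 : Q / V = P / V + T / V := by rw [hpy, add_div]
    linarith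
  · rw [hufs, huf]
    have h2 : Q / V = P / V + T / V := by rw [hpy, add_div]
    have h3 : 0 ≤ T / V := div_nonneg hT0 hvar.le
    linarith
end

section
/- Suppose f*(X,Z) and f(X,Z) are square-integrable. Then (MSE(f_z) − MSE(f)) − E[(f*(X,Z) − f*_z(Z))²] = −E[((f*(X,Z) − f*_z(Z)) − (f(X,Z) − f_z(Z)))²] ≤ 0; in particular the numerator of ℓ(f) is at most the numerator of the sensitivity index S. -/
open MeasureTheory ProbabilityTheory
open scoped ENNReal

private lemma condexp_memℒp_two {α : Type*} {m m0 : MeasurableSpace α} (hm : m ≤ m0)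
    (μ : Measure α) [IsProbabilityMeasure μ] {g : α → ℝ} (hg : MemLp g 2 μ) :
    MemLp (μ[g|m]) 2 μ := by
  set G : Lp ℝ 2 μ := hg.toLp g with hG
  have h1 : (condExpL2 ℝ ℝ hm G : α → ℝ) =ᵐ[μ] μ[g|m] := by
    refine ae_eq_condExp_of_forall_setIntegral_eq hm (hg.integrable one_le_two) ?_ ?_ ?_
    · intro s _ _
      exact integrableOn_condExpL2_of_measure_ne_top hm (measure_ne_top μ s) G
    · intro s hs _
      rw [integral_condExpL2_eq hm G hs (measure_ne_top μ s)]
      exact setIntegral_congr_ae (hm s hs) ((hg.coeFn_toLp).mono fun x hx _ => hx)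
    · exact aestronglyMeasurable_condExpL2 hm G
  exact (Lp.memLp (condExpL2 ℝ ℝ hm G : Lp ℝ 2 μ)).ae_eq h1

private lemma half_add_half : (1 : ℝ≥0∞) / 1 = 1 / 2 + 1 / 2 := by
  rw [ENNReal.div_add_div_same, one_div_one]
  norm_num
  rw [ENNReal.div_self] <;> norm_num

private lemma orth {α : Type*} {m m0 : MeasurableSpace α} (hm : m ≤ m0)
    (μ : Measure α) [IsProbabilityMeasure μ] {g h : α → ℝ} (hg : MemLp g 2 μ)
    (hh : MemLp h 2 μ) (hhm : StronglyMeasurable[m] h) :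
    ∫ x, (g x - (μ[g|m]) x) * h x ∂μ = 0 := by
  have hg' : MemLp (μ[g|m]) 2 μ := condexp_memℒp_two hm μ hg
  have hgh : Integrable (fun x => h x * g x) μ :=
    memLp_one_iff_integrable.mp (hg.smul (r := 1) hh)
  have hg'h : Integrable (fun x => h x * (μ[g|m]) x) μ :=
    memLp_one_iff_integrable.mp (hg'.smul (r := 1) hh)
  have key : μ[fun x => h x * g x|m] =ᵐ[μ] fun x => h x * (μ[g|m]) x :=
    condExp_mul_of_stronglyMeasurable_left hhm hgh (hg.integrable one_le_two)
  have h2 : ∫ x, h x * g x ∂μ = ∫ x, h x * (μ[g|m]) x ∂μ := by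
    rw [← integral_condExp hm (f := fun x => h x * g x) (μ := μ)]
    exact integral_congr_ae key
  have h3 : ∫ x, (g x - (μ[g|m]) x) * h x ∂μ
      = (∫ x, h x * g x ∂μ) - ∫ x, h x * (μ[g|m]) x ∂μ := by
    rw [← integral_sub hgh hg'h]
    exact integral_congr_ae (Filter.Eventually.of_forall fun x => by ring)
  rw [h3, h2, sub_self]

/-- If `f*(X,Z)` and `f(X,Z)` are square-integrable, then
`(MSE(f_z) − MSE(f)) − E[(f*(X,Z) − f*_z(Z))²]
  = −E[((f*(X,Z) − f*_z(Z)) − (f(X,Z) − f_z(Z)))²] ≤ 0`;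
in particular the numerator of `ℓ(f)` is at most the numerator of the sensitivity index `S`. -/
theorem lower_bound_numerator
    {Ω : Type*} [MeasurableSpace Ω] (μ : Measure Ω) [IsProbabilityMeasure μ]
    {m : ℕ} (X : Ω → ℝ) (Z : Ω → (Fin m → ℝ)) (hX : Measurable X) (hZ : Measurable Z)
    (fstar f : ℝ → (Fin m → ℝ) → ℝ)
    (hfstar : Measurable (Function.uncurry fstar)) (hf : Measurable (Function.uncurry f))
    (hfstarL2 : MemLp (fun ω => fstar (X ω) (Z ω)) 2 μ)
    (hfL2 : MemLp (fun ω => f (X ω) (Z ω)) 2 μ)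
    (fstarz fz : Ω → ℝ)
    (hfstarz : fstarz = μ[fun ω => fstar (X ω) (Z ω) | MeasurableSpace.comap Z inferInstance])
    (hfz : fz = μ[fun ω => f (X ω) (Z ω) | MeasurableSpace.comap Z inferInstance]) :
    ((∫ ω, (fstar (X ω) (Z ω) - fz ω) ^ 2 ∂μ)
        - (∫ ω, (fstar (X ω) (Z ω) - f (X ω) (Z ω)) ^ 2 ∂μ))
        - (∫ ω, (fstar (X ω) (Z ω) - fstarz ω) ^ 2 ∂μ)
      = -∫ ω, ((fstar (X ω) (Z ω) - fstarz ω) - (f (X ω) (Z ω) - fz ω)) ^ 2 ∂μ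
    ∧ ((∫ ω, (fstar (X ω) (Z ω) - fz ω) ^ 2 ∂μ)
        - (∫ ω, (fstar (X ω) (Z ω) - f (X ω) (Z ω)) ^ 2 ∂μ))
        - (∫ ω, (fstar (X ω) (Z ω) - fstarz ω) ^ 2 ∂μ) ≤ 0 := by
  have hm : MeasurableSpace.comap Z inferInstance ≤ ‹MeasurableSpace Ω› := hZ.comap_le
  subst hfstarz hfz
  set mz := MeasurableSpace.comap Z (inferInstance : MeasurableSpace (Fin m → ℝ)) with hmz
  set a : Ω → ℝ := fun ω => fstar (X ω) (Z ω) with ha_def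
  set b : Ω → ℝ := fun ω => f (X ω) (Z ω) with hb_def
  have ha : MemLp a 2 μ := hfstarL2
  have hb : MemLp b 2 μ := hfL2
  have ha' : MemLp (μ[a|mz]) 2 μ := condexp_memℒp_two hm μ ha
  have hb' : MemLp (μ[b|mz]) 2 μ := condexp_memℒp_two hm μ hb
  have h1 : Integrable (fun ω => (a ω - (μ[b|mz]) ω) ^ 2) μ := (ha.sub hb').integrable_sq
  have h2 : Integrable (fun ω => (a ω - b ω) ^ 2) μ := (ha.sub hb).integrable_sq
  have h3 : Integrable (fun ω => (a ω - (μ[a|mz]) ω) ^ 2) μ := (ha.sub ha').integrable_sq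
  have h4 : Integrable (fun ω => ((a ω - (μ[a|mz]) ω) - (b ω - (μ[b|mz]) ω)) ^ 2) μ :=
    ((ha.sub ha').sub (hb.sub hb')).integrable_sq
  have h12 : Integrable (fun ω => (a ω - (μ[b|mz]) ω) ^ 2 - (a ω - b ω) ^ 2) μ := h1.sub h2
  have h123 : Integrable
      (fun ω => (a ω - (μ[b|mz]) ω) ^ 2 - (a ω - b ω) ^ 2 - (a ω - (μ[a|mz]) ω) ^ 2) μ :=
    h12.sub h3
  have horth : ∫ ω, (b ω - (μ[b|mz]) ω) * ((μ[a|mz]) ω - (μ[b|mz]) ω) ∂μ = 0 :=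
    orth hm μ hb (ha'.sub hb')
      (stronglyMeasurable_condExp.sub stronglyMeasurable_condExp)
  have hcombine :
      ∫ ω, ((a ω - (μ[b|mz]) ω) ^ 2 - (a ω - b ω) ^ 2 - (a ω - (μ[a|mz]) ω) ^ 2
          + ((a ω - (μ[a|mz]) ω) - (b ω - (μ[b|mz]) ω)) ^ 2) ∂μ
        = ((∫ ω, (a ω - (μ[b|mz]) ω) ^ 2 ∂μ) - (∫ ω, (a ω - b ω) ^ 2 ∂μ))
          - (∫ ω, (a ω - (μ[a|mz]) ω) ^ 2 ∂μ)
          + ∫ ω, ((a ω - (μ[a|mz]) ω) - (b ω - (μ[b|mz]) ω)) ^ 2 ∂μ := by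
    rw [integral_add h123 h4, integral_sub h12 h3, integral_sub h1 h2]
  have hzero :
      ∫ ω, ((a ω - (μ[b|mz]) ω) ^ 2 - (a ω - b ω) ^ 2 - (a ω - (μ[a|mz]) ω) ^ 2
          + ((a ω - (μ[a|mz]) ω) - (b ω - (μ[b|mz]) ω)) ^ 2) ∂μ = 0 := by
    have : ∫ ω, ((a ω - (μ[b|mz]) ω) ^ 2 - (a ω - b ω) ^ 2 - (a ω - (μ[a|mz]) ω) ^ 2
          + ((a ω - (μ[a|mz]) ω) - (b ω - (μ[b|mz]) ω)) ^ 2) ∂μ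
        = ∫ ω, 2 * ((b ω - (μ[b|mz]) ω) * ((μ[a|mz]) ω - (μ[b|mz]) ω)) ∂μ :=
      integral_congr_ae (Filter.Eventually.of_forall fun ω => by ring)
    rw [this, integral_const_mul, horth, mul_zero]
  rw [hcombine] at hzero
  have hnonneg : 0 ≤ ∫ ω, ((a ω - (μ[a|mz]) ω) - (b ω - (μ[b|mz]) ω)) ^ 2 ∂μ :=
    integral_nonneg fun ω => sq_nonneg _
  constructor
  · linarith
  · linarith
end

section
/- Suppose f(X,Z) is square-integrable. Then E[(F^z)²] = (1/K)·E[f(X,Z)²] + ((K−1)/K)·E[f_z(Z)²]. -/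
open MeasureTheory ProbabilityTheory Set


lemma map_pair_eq_compProd {Ω : Type*} [MeasurableSpace Ω] [StandardBorelSpace Ω] [Nonempty Ω]
    {μ : Measure Ω} [IsFiniteMeasure μ] {β : Type*} [MeasurableSpace β]
    {Z : Ω → β} {Y : Ω → ℝ} (hY : Measurable Y) :
    μ.map (fun ω => (Z ω, Y ω)) = (μ.map Z) ⊗ₘ condDistrib Y Z μ := by
  conv_lhs => rw [← (μ.map (fun ω => (Z ω, Y ω))).disintegrate
    (μ.map (fun ω => (Z ω, Y ω))).condKernel]
  rw [condDistrib, Measure.fst_map_prodMk hY]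

lemma map_triple_eq_compProd {Ω : Type*} [MeasurableSpace Ω] [StandardBorelSpace Ω] [Nonempty Ω]
    (μ : Measure Ω) [IsProbabilityMeasure μ] {β : Type*} [MeasurableSpace β]
    {Z : Ω → β} (X1 X2 : Ω → ℝ) (hZ : Measurable Z) (h1 : Measurable X1) (h2 : Measurable X2)
    (hind : CondIndepFun (MeasurableSpace.comap Z inferInstance) hZ.comap_le X1 X2 μ)
    (κ : Kernel β ℝ) [IsMarkovKernel κ]
    (hc1 : ⇑(condDistrib X1 Z μ) =ᵐ[μ.map Z] ⇑κ)
    (hc2 : ⇑(condDistrib X2 Z μ) =ᵐ[μ.map Z] ⇑κ) :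
    μ.map (fun ω => (Z ω, (X1 ω, X2 ω))) = (μ.map Z) ⊗ₘ (κ ×ₖ κ) := by
  have hm' : MeasurableSpace.comap Z inferInstance ≤ _ := hZ.comap_le
  set ν := μ.map Z with hνdef
  have hνP : IsProbabilityMeasure ν := Measure.isProbabilityMeasure_map hZ.aemeasurable
  have htriple : Measurable (fun ω => (Z ω, (X1 ω, X2 ω))) := hZ.prodMk (h1.prodMk h2)
  refine MeasureTheory.ext_of_generate_finite
    (Set.image2 (· ×ˢ ·) { s : Set β | MeasurableSet s }
      (Set.image2 (· ×ˢ ·) { s : Set ℝ | MeasurableSet s } { t : Set ℝ | MeasurableSet t }))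
    ?_ ?_ ?_ ?_
  · exact (generateFrom_eq_prod MeasurableSpace.generateFrom_measurableSet generateFrom_prod
      isCountablySpanning_measurableSet
      (isCountablySpanning_measurableSet.prod isCountablySpanning_measurableSet)).symm
  · exact MeasurableSpace.isPiSystem_measurableSet.prod isPiSystem_prod
  · rintro _ ⟨A, hA, _, ⟨t₁, ht₁, t₂, ht₂, rfl⟩, rfl⟩
    simp only [Set.mem_setOf_eq] at hA ht₁ ht₂
    -- RHS
    have hRHS : (ν ⊗ₘ (κ ×ₖ κ)) (A ×ˢ (t₁ ×ˢ t₂)) = ∫⁻ z in A, κ z t₁ * κ z t₂ ∂ν := by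
      rw [Measure.compProd_apply_prod hA (ht₁.prod ht₂)]
      refine lintegral_congr fun z => ?_
      rw [Kernel.prod_apply, Measure.prod_prod]
    -- LHS
    have hLHS : (μ.map (fun ω => (Z ω, (X1 ω, X2 ω)))) (A ×ˢ (t₁ ×ˢ t₂))
        = μ (Z ⁻¹' A ∩ (X1 ⁻¹' t₁ ∩ X2 ⁻¹' t₂)) := by
      rw [Measure.map_apply htriple (hA.prod (ht₁.prod ht₂)), Set.mk_preimage_prod,
        Set.mk_preimage_prod]
    rw [hRHS, hLHS]
    -- now prove the ENNReal equality via toReal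
    have hne1 : μ (Z ⁻¹' A ∩ (X1 ⁻¹' t₁ ∩ X2 ⁻¹' t₂)) ≠ ⊤ := measure_ne_top _ _
    have hle : ∫⁻ z in A, κ z t₁ * κ z t₂ ∂ν ≤ 1 := by
      calc ∫⁻ z in A, κ z t₁ * κ z t₂ ∂ν ≤ ∫⁻ _ in A, 1 ∂ν := by
            refine lintegral_mono fun z => ?_
            calc κ z t₁ * κ z t₂ ≤ 1 * 1 :=
                  mul_le_mul' (prob_le_one) (prob_le_one)
            _ = 1 := by simp
        _ ≤ 1 := by simp [lintegral_const]; exact prob_le_one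
    have hne2 : ∫⁻ z in A, κ z t₁ * κ z t₂ ∂ν ≠ ⊤ := (lt_of_le_of_lt hle ENNReal.one_lt_top).ne
    rw [← ENNReal.toReal_eq_toReal_iff' hne1 hne2]
    -- conditional expectation computations
    have hAm' : MeasurableSet[MeasurableSpace.comap Z inferInstance] (Z ⁻¹' A) := ⟨A, hA, rfl⟩
    have hT : MeasurableSet (X1 ⁻¹' t₁ ∩ X2 ⁻¹' t₂) := (h1 ht₁).inter (h2 ht₂)
    have hindT : Integrable ((X1 ⁻¹' t₁ ∩ X2 ⁻¹' t₂).indicator (fun _ => (1 : ℝ))) μ :=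
      (integrable_const _).indicator hT
    have step1 : (μ (Z ⁻¹' A ∩ (X1 ⁻¹' t₁ ∩ X2 ⁻¹' t₂))).toReal
        = ∫ ω in Z ⁻¹' A, (μ⟦X1 ⁻¹' t₁ ∩ X2 ⁻¹' t₂ | MeasurableSpace.comap Z inferInstance⟧) ω ∂μ := by
      rw [setIntegral_condExp hm' hindT hAm']
      rw [setIntegral_indicator hT, setIntegral_const]
      simp [measureReal_def]
    -- product rule from conditional independence
    have hprod := (condIndepFun_iff_condExp_inter_preimage_eq_mul h1 h2).mp hind t₁ t₂ ht₁ ht₂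
    -- identification of the conditional probabilities
    have hp1 : (μ⟦X1 ⁻¹' t₁ | MeasurableSpace.comap Z inferInstance⟧) =ᵐ[μ] fun ω => (κ (Z ω) t₁).toReal := by
      have h := (condDistrib_ae_eq_condExp (μ := μ) hZ h1 ht₁).symm
      have h' : ∀ᵐ ω ∂μ, condDistrib X1 Z μ (Z ω) = κ (Z ω) :=
        ae_of_ae_map hZ.aemeasurable hc1
      filter_upwards [h, h'] with ω hω hω'
      rw [hω, hω', measureReal_def]
    have hp2 : (μ⟦X2 ⁻¹' t₂ | MeasurableSpace.comap Z inferInstance⟧) =ᵐ[μ] fun ω => (κ (Z ω) t₂).toReal := by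
      have h := (condDistrib_ae_eq_condExp (μ := μ) hZ h2 ht₂).symm
      have h' : ∀ᵐ ω ∂μ, condDistrib X2 Z μ (Z ω) = κ (Z ω) :=
        ae_of_ae_map hZ.aemeasurable hc2
      filter_upwards [h, h'] with ω hω hω'
      rw [hω, hω', measureReal_def]
    have step2 : ∫ ω in Z ⁻¹' A, (μ⟦X1 ⁻¹' t₁ ∩ X2 ⁻¹' t₂ | MeasurableSpace.comap Z inferInstance⟧) ω ∂μ
        = ∫ ω in Z ⁻¹' A, (κ (Z ω) t₁).toReal * (κ (Z ω) t₂).toReal ∂μ := by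
      refine integral_congr_ae (ae_restrict_of_ae ?_)
      filter_upwards [hprod, hp1, hp2] with ω h h1' h2'
      rw [h, h1', h2']
    have hg1 : Measurable fun z => (κ z t₁).toReal := (κ.measurable_coe ht₁).ennreal_toReal
    have hg2 : Measurable fun z => (κ z t₂).toReal := (κ.measurable_coe ht₂).ennreal_toReal
    have step3 : ∫ ω in Z ⁻¹' A, (κ (Z ω) t₁).toReal * (κ (Z ω) t₂).toReal ∂μ
        = ∫ z in A, (κ z t₁).toReal * (κ z t₂).toReal ∂ν := by
      rw [hνdef, ← setIntegral_map (f := fun z => (κ z t₁).toReal * (κ z t₂).toReal) hA ((hg1.mul hg2).aestronglyMeasurable) hZ.aemeasurable]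
    have step4 : ∫ z in A, (κ z t₁).toReal * (κ z t₂).toReal ∂ν
        = (∫⁻ z in A, κ z t₁ * κ z t₂ ∂ν).toReal := by
      rw [← integral_toReal (f := fun z => κ z t₁ * κ z t₂) ((κ.measurable_coe ht₁).mul (κ.measurable_coe ht₂)).aemeasurable
        (Filter.Eventually.of_forall fun z =>
          lt_of_le_of_lt (mul_le_mul' prob_le_one prob_le_one) (by norm_num))]
      simp_rw [ENNReal.toReal_mul]
    rw [step1, step2, step3, step4]
  · simp only [Measure.map_apply htriple MeasurableSet.univ, Set.preimage_univ]
    have : (ν ⊗ₘ (κ ×ₖ κ)) Set.univ = ν Set.univ := Measure.compProd_apply_univ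
    simp [this]

/-- If `f(X,Z)` is square-integrable and, conditionally on `Z`, the variables
`X, X̃^(1), …, X̃^(K)` are i.i.d., then
`E[(F^z)²] = (1/K)·E[f(X,Z)²] + ((K−1)/K)·E[f_z(Z)²]`. -/
theorem Fz_second_moment
    {Ω : Type*} [MeasurableSpace Ω] [StandardBorelSpace Ω] [Nonempty Ω]
    (μ : Measure Ω) [IsProbabilityMeasure μ]
    {m : ℕ} (X : Ω → ℝ) (Z : Ω → (Fin m → ℝ)) (hX : Measurable X) (hZ : Measurable Z)
    (f : ℝ → (Fin m → ℝ) → ℝ) (hf : Measurable (Function.uncurry f))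
    (hfL2 : MemLp (fun ω => f (X ω) (Z ω)) 2 μ)
    {K : ℕ} (hK : 1 ≤ K) (Xt : Fin K → Ω → ℝ) (hXt : ∀ k, Measurable (Xt k))
    (hci : iCondIndepFun (MeasurableSpace.comap Z inferInstance) hZ.comap_le
      (Fin.cons (α := fun _ => Ω → ℝ) X Xt) μ)
    (hcd : ∀ k, condDistrib (Xt k) Z μ =ᵐ[μ.map Z] condDistrib X Z μ)
    (Fz : Ω → ℝ) (hFz : ∀ ω, Fz ω = (1 / (K : ℝ)) * ∑ k : Fin K, f (Xt k ω) (Z ω))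
    (fz : Ω → ℝ)
    (hfz : fz = μ[fun ω => f (X ω) (Z ω) | MeasurableSpace.comap Z inferInstance]) :
    ∫ ω, (Fz ω) ^ 2 ∂μ
      = (1 / (K : ℝ)) * ∫ ω, (f (X ω) (Z ω)) ^ 2 ∂μ
        + (((K : ℝ) - 1) / (K : ℝ)) * ∫ ω, (fz ω) ^ 2 ∂μ := by
  have hKne : (K : ℝ) ≠ 0 := Nat.cast_ne_zero.mpr (by omega)
  set κ := condDistrib X Z μ with hκdef
  have hνP : IsProbabilityMeasure (μ.map Z) := Measure.isProbabilityMeasure_map hZ.aemeasurable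
  have hφ : Measurable (fun p : (Fin m → ℝ) × ℝ => f p.2 p.1) := hf.comp measurable_swap
  set φ : (Fin m → ℝ) × ℝ → ℝ := fun p => f p.2 p.1 with hφdef
  -- pair laws
  have hXZlaw : μ.map (fun ω => (Z ω, X ω)) = (μ.map Z) ⊗ₘ κ := map_pair_eq_compProd hX
  have hpair : ∀ k : Fin K, μ.map (fun ω => (Z ω, Xt k ω)) = μ.map (fun ω => (Z ω, X ω)) := by
    intro k
    rw [map_pair_eq_compProd (hXt k), hXZlaw, Measure.compProd_congr (hcd k)]
  set G : Fin K → Ω → ℝ := fun k ω => f (Xt k ω) (Z ω) with hG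
  have hGL2 : ∀ k, MemLp (G k) 2 μ := by
    intro k
    have h1 : MemLp φ 2 (μ.map (fun ω => (Z ω, X ω))) := by
      rw [memLp_map_measure_iff hφ.aestronglyMeasurable
        (hZ.aemeasurable.prodMk hX.aemeasurable)]
      exact hfL2
    have h2 : MemLp φ 2 (μ.map (fun ω => (Z ω, Xt k ω))) := by rw [hpair k]; exact h1
    rw [memLp_map_measure_iff hφ.aestronglyMeasurable
      (hZ.aemeasurable.prodMk (hXt k).aemeasurable)] at h2
    exact h2
  -- integrability of products
  have hGmul : ∀ j k : Fin K, Integrable (fun ω => G j ω * G k ω) μ := by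
    intro j k
    have := ((hGL2 k).smul (𝕜 := ℝ) (hGL2 j) (p := 2) (q := 2) (r := 1) (hpqr := ⟨by norm_num [ENNReal.inv_two_add_inv_two]⟩))
    rw [memLp_one_iff_integrable] at this
    exact this
  -- diagonal terms
  have hdiag : ∀ k, ∫ ω, G k ω * G k ω ∂μ = ∫ ω, (f (X ω) (Z ω)) ^ 2 ∂μ := by
    intro k
    have hφ2 : AEStronglyMeasurable (fun p => φ p * φ p) (μ.map (fun ω => (Z ω, Xt k ω))) :=
      (hφ.mul hφ).aestronglyMeasurable
    have e1 : ∫ ω, G k ω * G k ω ∂μ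
        = ∫ p, φ p * φ p ∂(μ.map (fun ω => (Z ω, Xt k ω))) := by
      rw [integral_map (hZ.aemeasurable.prodMk (hXt k).aemeasurable) hφ2]
    have hφ2' : AEStronglyMeasurable (fun p => φ p * φ p) (μ.map (fun ω => (Z ω, X ω))) :=
      (hφ.mul hφ).aestronglyMeasurable
    have e2 : ∫ p, φ p * φ p ∂(μ.map (fun ω => (Z ω, X ω)))
        = ∫ ω, f (X ω) (Z ω) * f (X ω) (Z ω) ∂μ := by
      rw [integral_map (hZ.aemeasurable.prodMk hX.aemeasurable) hφ2']
    rw [e1, hpair k, e2]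
    simp_rw [← sq]
  -- fz representation
  have hfzrep : fz =ᵐ[μ] fun ω => ∫ x, f x (Z ω) ∂κ (Z ω) := by
    rw [hfz]
    exact condExp_prod_ae_eq_integral_condDistrib (μ := μ) hZ hX.aemeasurable
      hφ.stronglyMeasurable (hfL2.integrable one_le_two)
  have hsmκ : StronglyMeasurable fun z => ∫ x, f x z ∂κ z :=
    hφ.stronglyMeasurable.integral_kernel_prod_right'
  have hfzsq : ∫ ω, (fz ω) ^ 2 ∂μ = ∫ z, (∫ x, f x z ∂κ z) ^ 2 ∂(μ.map Z) := by
    have h1 : ∫ ω, (fz ω) ^ 2 ∂μ = ∫ ω, (∫ x, f x (Z ω) ∂κ (Z ω)) ^ 2 ∂μ :=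
      integral_congr_ae (hfzrep.mono fun ω h => by dsimp only; rw [h])
    rw [h1, integral_map hZ.aemeasurable]
    exact (hsmκ.mul hsmκ).aestronglyMeasurable.congr
      (Filter.Eventually.of_forall fun z => (pow_two _).symm)
  -- cross terms
  have hcross : ∀ j k : Fin K, j ≠ k →
      ∫ ω, G j ω * G k ω ∂μ = ∫ z, (∫ x, f x z ∂κ z) ^ 2 ∂(μ.map Z) := by
    intro j k hjk
    have hind : CondIndepFun (MeasurableSpace.comap Z inferInstance) hZ.comap_le
        (Xt j) (Xt k) μ := by
      have h := hci.condIndepFun (i := j.succ) (j := k.succ)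
        (fun h => hjk (Fin.succ_injective K h))
      simpa [Fin.cons_succ] using h
    have hρ : μ.map (fun ω => (Z ω, (Xt j ω, Xt k ω))) = (μ.map Z) ⊗ₘ (κ ×ₖ κ) :=
      map_triple_eq_compProd μ (Xt j) (Xt k) hZ (hXt j) (hXt k) hind κ (hcd j) (hcd k)
    have hΦ : Measurable (fun p : (Fin m → ℝ) × (ℝ × ℝ) => f p.2.1 p.1 * f p.2.2 p.1) := by
      have m1 : Measurable (fun p : (Fin m → ℝ) × (ℝ × ℝ) => f p.2.1 p.1) :=
        hf.comp ((measurable_fst.comp measurable_snd).prodMk measurable_fst)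
      have m2 : Measurable (fun p : (Fin m → ℝ) × (ℝ × ℝ) => f p.2.2 p.1) :=
        hf.comp ((measurable_snd.comp measurable_snd).prodMk measurable_fst)
      exact m1.mul m2
    have htriple : Measurable (fun ω => (Z ω, (Xt j ω, Xt k ω))) :=
      hZ.prodMk ((hXt j).prodMk (hXt k))
    have hintΦ : Integrable (fun p : (Fin m → ℝ) × (ℝ × ℝ) => f p.2.1 p.1 * f p.2.2 p.1)
        (μ.map (fun ω => (Z ω, (Xt j ω, Xt k ω)))) := by
      rw [integrable_map_measure hΦ.aestronglyMeasurable htriple.aemeasurable]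
      exact hGmul j k
    have e1 : ∫ ω, G j ω * G k ω ∂μ
        = ∫ p, f p.2.1 p.1 * f p.2.2 p.1 ∂(μ.map (fun ω => (Z ω, (Xt j ω, Xt k ω)))) := by
      rw [integral_map htriple.aemeasurable hΦ.aestronglyMeasurable]
    rw [e1, hρ, Measure.integral_compProd (hρ ▸ hintΦ)]
    refine integral_congr_ae (Filter.Eventually.of_forall fun z => ?_)
    dsimp only
    rw [Kernel.prod_apply]
    have := integral_prod_mul (μ := κ z) (ν := κ z) (fun x => f x z) (fun x => f x z)
    simpa [← sq] using this
  -- expansion of the square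
  have hexp : ∀ ω, Fz ω ^ 2
      = (1 / (K : ℝ)) ^ 2 * ∑ j : Fin K, ∑ k : Fin K, G j ω * G k ω := by
    intro ω
    rw [hFz ω, mul_pow, sq (∑ k : Fin K, f (Xt k ω) (Z ω)), Finset.sum_mul_sum]
  have hsumint : ∫ ω, Fz ω ^ 2 ∂μ
      = (1 / (K : ℝ)) ^ 2 * ∑ j : Fin K, ∑ k : Fin K, ∫ ω, G j ω * G k ω ∂μ := by
    calc ∫ ω, Fz ω ^ 2 ∂μ
        = ∫ ω, (1 / (K : ℝ)) ^ 2 * ∑ j : Fin K, ∑ k : Fin K, G j ω * G k ω ∂μ :=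
          integral_congr_ae (Filter.Eventually.of_forall fun ω => hexp ω)
      _ = (1 / (K : ℝ)) ^ 2 * ∫ ω, ∑ j : Fin K, ∑ k : Fin K, G j ω * G k ω ∂μ :=
          integral_const_mul _ _
      _ = (1 / (K : ℝ)) ^ 2 * ∑ j : Fin K, ∑ k : Fin K, ∫ ω, G j ω * G k ω ∂μ := by
          rw [integral_finset_sum _ (fun j _ => integrable_finset_sum _
            (fun k _ => hGmul j k))]
          congr 1
          refine Finset.sum_congr rfl fun j _ => ?_
          rw [integral_finset_sum _ (fun k _ => hGmul j k)]
  set A := ∫ ω, (f (X ω) (Z ω)) ^ 2 ∂μ with hA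
  set B := ∫ z, (∫ x, f x z ∂κ z) ^ 2 ∂(μ.map Z) with hB
  have hterm : ∀ j k : Fin K, ∫ ω, G j ω * G k ω ∂μ = if j = k then A else B := by
    intro j k
    by_cases h : j = k
    · subst h; simp [hdiag j]
    · simp [h, hcross j k h]
  have hsum : ∑ j : Fin K, ∑ k : Fin K, ∫ ω, G j ω * G k ω ∂μ
      = (K : ℝ) * A + ((K : ℝ) * (K : ℝ) - (K : ℝ)) * B := by
    simp_rw [hterm]
    have hrow : ∀ j : Fin K, ∑ k : Fin K, (if j = k then A else B)
        = A + ((K : ℝ) - 1) * B := by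
      intro j
      have : ∀ k : Fin K, (if j = k then A else B) = B + (if j = k then A - B else 0) := by
        intro k; by_cases h : j = k <;> simp [h]
      simp_rw [this]
      rw [Finset.sum_add_distrib, Finset.sum_const, Finset.sum_ite_eq]
      simp [Finset.card_univ]
      ring
    simp_rw [hrow]
    rw [Finset.sum_const, Finset.card_univ]
    simp
    ring
  rw [hsumint, hsum, hfzsq]
  field_simp
end

section
/- Suppose f(X,Z) is square-integrable. Then E[(f(X,Z) − F^z)²] = ((K+1)/K) · E[(f(X,Z) − f_z(Z))²]. -/
open MeasureTheory ProbabilityTheory MeasurableSpace Set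

section AuxSP

variable {Ω : Type*} [MeasurableSpace Ω] {β : Type*} [MeasurableSpace β]

lemma auxSP_L2_mul_integrable {μ : Measure Ω} {a b : Ω → ℝ}
    (ha : MemLp a 2 μ) (hb : MemLp b 2 μ) :
    Integrable (fun ω => a ω * b ω) μ := by
  have h1 := (ha.add hb).integrable_sq
  have h2 := ha.integrable_sq
  have h3 := hb.integrable_sq
  have : Integrable (fun ω => (((a ω + b ω)^2 - a ω ^2) - b ω ^2) / 2) μ :=
    ((h1.sub h2).sub h3).div_const 2
  refine this.congr (Filter.Eventually.of_forall fun ω => ?_)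
  ring

lemma auxSP_sq_integral_le {α : Type*} [MeasurableSpace α] (π : Measure α)
    [IsProbabilityMeasure π] {g : α → ℝ} (hg : MemLp g 2 π) :
    (∫ x, g x ∂π)^2 ≤ ∫ x, (g x)^2 ∂π := by
  have h := variance_nonneg g π
  rw [variance_eq_sub hg] at h
  have h2 : π[g ^ 2] = ∫ x, (g x)^2 ∂π := by
    simp [Pi.pow_apply]
  rw [h2] at h
  linarith

lemma auxSP_compProd_map_condDistrib {μ : Measure Ω} [IsFiniteMeasure μ]
    {Z : Ω → β} {U : Ω → ℝ} (hU : Measurable U) :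
    (μ.map Z) ⊗ₘ condDistrib U Z μ = μ.map (fun ω => (Z ω, U ω)) := by
  rw [condDistrib, ← Measure.fst_map_prodMk (X := Z) hU, Measure.disintegrate]

lemma auxSP_map_pair_eq {μ : Measure Ω} [IsFiniteMeasure μ]
    {Z : Ω → β} {U X : Ω → ℝ} (hU : Measurable U) (hX : Measurable X)
    (hcd : condDistrib U Z μ =ᵐ[μ.map Z] condDistrib X Z μ) :
    μ.map (fun ω => (Z ω, U ω)) = μ.map (fun ω => (Z ω, X ω)) := by
  rw [← auxSP_compProd_map_condDistrib hU, ← auxSP_compProd_map_condDistrib hX,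
    Measure.compProd_congr hcd]

variable [StandardBorelSpace Ω] [Nonempty Ω]

lemma auxSP_condIndep_map_prod {μ : Measure Ω} [IsProbabilityMeasure μ]
    {Z : Ω → β} {U V : Ω → ℝ} (hZ : Measurable Z) (hU : Measurable U) (hV : Measurable V)
    (h : CondIndepFun (MeasurableSpace.comap Z inferInstance) hZ.comap_le U V μ) :
    μ.map (fun ω => (Z ω, (U ω, V ω)))
      = (μ.map Z) ⊗ₘ ((condDistrib U Z μ) ×ₖ (condDistrib V Z μ)) := by
  have hT : Measurable (fun ω => (Z ω, (U ω, V ω))) := hZ.prodMk (hU.prodMk hV)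
  haveI : IsProbabilityMeasure (μ.map (fun ω => (Z ω, (U ω, V ω)))) :=
    Measure.isProbabilityMeasure_map hT.aemeasurable
  haveI : IsProbabilityMeasure (μ.map Z) := Measure.isProbabilityMeasure_map hZ.aemeasurable
  have hprod := (condIndepFun_iff_condExp_inter_preimage_eq_mul
    (m' := MeasurableSpace.comap Z inferInstance) (hm' := hZ.comap_le) hU hV).mp h
  refine ext_of_generate_finite
    (image2 (· ×ˢ ·) { s : Set β | MeasurableSet s }
      (image2 (· ×ˢ ·) { s : Set ℝ | MeasurableSet s } { t : Set ℝ | MeasurableSet t }))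
    ?_ ?_ ?_ ?_
  · exact (generateFrom_eq_prod generateFrom_measurableSet generateFrom_prod
      isCountablySpanning_measurableSet
      (isCountablySpanning_measurableSet.prod isCountablySpanning_measurableSet)).symm
  · exact isPiSystem_measurableSet.prod (isPiSystem_measurableSet.prod isPiSystem_measurableSet)
  · rintro _ ⟨t, ht, _, ⟨a, ha, b, hb, rfl⟩, rfl⟩
    simp only [mem_setOf_eq] at ht ha hb
    have hUVab : MeasurableSet (U ⁻¹' a ∩ V ⁻¹' b) := (hU ha).inter (hV hb)
    have hZt : MeasurableSet[MeasurableSpace.comap Z inferInstance] (Z ⁻¹' t) := ⟨t, ht, rfl⟩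
    -- LHS
    have hL : μ.map (fun ω => (Z ω, (U ω, V ω))) (t ×ˢ (a ×ˢ b))
        = μ (Z ⁻¹' t ∩ (U ⁻¹' a ∩ V ⁻¹' b)) := by
      rw [Measure.map_apply hT (ht.prod (ha.prod hb))]
      rfl
    -- RHS
    have hR : ((μ.map Z) ⊗ₘ ((condDistrib U Z μ) ×ₖ (condDistrib V Z μ))) (t ×ˢ (a ×ˢ b))
        = ∫⁻ z in t, (condDistrib U Z μ z a) * (condDistrib V Z μ z b) ∂(μ.map Z) := by
      rw [Measure.compProd_apply_prod ht (ha.prod hb)]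
      refine lintegral_congr fun z => ?_
      rw [Kernel.prod_apply, Measure.prod_prod]
    rw [hL, hR]
    have hRfin : ∫⁻ z in t, (condDistrib U Z μ z a) * (condDistrib V Z μ z b) ∂(μ.map Z) ≠ ⊤ := by
      refine ne_top_of_le_ne_top (measure_ne_top (μ.map Z) t) ?_
      calc ∫⁻ z in t, (condDistrib U Z μ z a) * (condDistrib V Z μ z b) ∂(μ.map Z)
          ≤ ∫⁻ _ in t, 1 ∂(μ.map Z) :=
            lintegral_mono fun z => mul_le_one' prob_le_one prob_le_one
        _ = (μ.map Z) t := by simp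
    have hmeasUV : Measurable fun z => (condDistrib U Z μ z a) * (condDistrib V Z μ z b) :=
      (Kernel.measurable_coe _ ha).mul (Kernel.measurable_coe _ hb)
    set ind : Ω → ℝ := (U ⁻¹' a ∩ V ⁻¹' b).indicator (fun _ => (1:ℝ)) with hind
    have hindint : Integrable ind μ := (integrable_const _).indicator hUVab
    -- chain of real-valued equalities
    have step1 : (μ (Z ⁻¹' t ∩ (U ⁻¹' a ∩ V ⁻¹' b))).toReal
        = ∫ ω in Z ⁻¹' t, ind ω ∂μ := by
      rw [integral_indicator_const (1:ℝ) hUVab, measureReal_restrict_apply hUVab,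
        inter_comm (U ⁻¹' a ∩ V ⁻¹' b)]
      simp [measureReal_def]
    have step2 : ∫ ω in Z ⁻¹' t, ind ω ∂μ
        = ∫ ω in Z ⁻¹' t, (μ[ind|MeasurableSpace.comap Z inferInstance]) ω ∂μ :=
      (setIntegral_condExp hZ.comap_le hindint hZt).symm
    have hae : (μ[ind|MeasurableSpace.comap Z inferInstance])
        =ᵐ[μ] fun ω => (condDistrib U Z μ (Z ω) a).toReal * (condDistrib V Z μ (Z ω) b).toReal := by
      filter_upwards [hprod a b ha hb, condDistrib_ae_eq_condExp hZ hU ha,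
        condDistrib_ae_eq_condExp hZ hV hb] with ω h1 h2 h3
      rw [hind]
      rw [show ((U ⁻¹' a ∩ V ⁻¹' b).indicator (fun _ => (1:ℝ)))
        = ((U ⁻¹' a ∩ V ⁻¹' b).indicator (fun _ => (1:ℝ))) from rfl] at h1
      rw [h1, ← h2, ← h3]
      rfl
    have step3 : ∫ ω in Z ⁻¹' t, (μ[ind|MeasurableSpace.comap Z inferInstance]) ω ∂μ
        = ∫ ω in Z ⁻¹' t,
            (condDistrib U Z μ (Z ω) a).toReal * (condDistrib V Z μ (Z ω) b).toReal ∂μ :=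
      setIntegral_congr_ae (hZ ht) (hae.mono fun ω hω _ => hω)
    have step4 : ∫ ω in Z ⁻¹' t,
          (condDistrib U Z μ (Z ω) a).toReal * (condDistrib V Z μ (Z ω) b).toReal ∂μ
        = ∫ z in t, (condDistrib U Z μ z a).toReal * (condDistrib V Z μ z b).toReal ∂(μ.map Z) := by
      rw [Measure.restrict_map hZ ht]
      rw [integral_map hZ.aemeasurable.restrict]
      exact ((Kernel.measurable_coe _ ha).ennreal_toReal.mul
        (Kernel.measurable_coe _ hb).ennreal_toReal).aestronglyMeasurable
    have step5 : ∫ z in t, (condDistrib U Z μ z a).toReal * (condDistrib V Z μ z b).toReal ∂(μ.map Z)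
        = (∫⁻ z in t, (condDistrib U Z μ z a) * (condDistrib V Z μ z b) ∂(μ.map Z)).toReal := by
      rw [← integral_toReal hmeasUV.aemeasurable.restrict
        (Filter.Eventually.of_forall fun z =>
          lt_of_le_of_lt (mul_le_one' prob_le_one prob_le_one) ENNReal.one_lt_top)]
      exact integral_congr_ae (Filter.Eventually.of_forall fun z => ENNReal.toReal_mul.symm)
    exact (ENNReal.toReal_eq_toReal_iff' (measure_ne_top μ _) hRfin).mp
      (step1.trans (step2.trans (step3.trans (step4.trans step5))))
  · simp only [measure_univ]

lemma auxSP_cross_zero {μ : Measure Ω} [IsProbabilityMeasure μ]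
    {Z : Ω → β} {U V X : Ω → ℝ} (hZ : Measurable Z) (hU : Measurable U) (hV : Measurable V)
    (h : CondIndepFun (MeasurableSpace.comap Z inferInstance) hZ.comap_le U V μ)
    (hcdU : condDistrib U Z μ =ᵐ[μ.map Z] condDistrib X Z μ)
    (hcdV : condDistrib V Z μ =ᵐ[μ.map Z] condDistrib X Z μ)
    {φ : β × ℝ → ℝ} (hφ : StronglyMeasurable φ)
    (hmean : ∀ᵐ z ∂(μ.map Z), ∫ x, φ (z, x) ∂(condDistrib X Z μ z) = 0)
    (hint : Integrable (fun ω => φ (Z ω, U ω) * φ (Z ω, V ω)) μ) :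
    ∫ ω, φ (Z ω, U ω) * φ (Z ω, V ω) ∂μ = 0 := by
  have hT : Measurable (fun ω => (Z ω, (U ω, V ω))) := hZ.prodMk (hU.prodMk hV)
  set Ψ : β × (ℝ × ℝ) → ℝ := fun p => φ (p.1, p.2.1) * φ (p.1, p.2.2) with hΨ
  have hΨm : StronglyMeasurable Ψ :=
    (hφ.comp_measurable (measurable_fst.prodMk (measurable_fst.comp measurable_snd))).mul
      (hφ.comp_measurable (measurable_fst.prodMk (measurable_snd.comp measurable_snd)))
  have hmap := auxSP_condIndep_map_prod hZ hU hV h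
  have h1 : ∫ ω, φ (Z ω, U ω) * φ (Z ω, V ω) ∂μ
      = ∫ p, Ψ p ∂(μ.map (fun ω => (Z ω, (U ω, V ω)))) :=
    (integral_map hT.aemeasurable hΨm.aestronglyMeasurable).symm
  have hPint : Integrable Ψ ((μ.map Z) ⊗ₘ ((condDistrib U Z μ) ×ₖ (condDistrib V Z μ))) := by
    rw [← hmap]
    exact (integrable_map_measure hΨm.aestronglyMeasurable hT.aemeasurable).mpr hint
  rw [h1, hmap, Measure.integral_compProd hPint]
  have hae : (fun z => ∫ p, Ψ (z, p) ∂(((condDistrib U Z μ) ×ₖ (condDistrib V Z μ)) z))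
      =ᵐ[μ.map Z] fun _ => (0:ℝ) := by
    filter_upwards [hcdU, hcdV, hmean] with z h2 h3 h4
    rw [Kernel.prod_apply, h2, h3]
    calc ∫ p, Ψ (z, p) ∂((condDistrib X Z μ z).prod (condDistrib X Z μ z))
        = (∫ x, φ (z, x) ∂(condDistrib X Z μ z)) * ∫ x, φ (z, x) ∂(condDistrib X Z μ z) :=
          integral_prod_mul (fun x => φ (z, x)) (fun x => φ (z, x))
      _ = 0 := by rw [h4, mul_zero]
  rw [integral_congr_ae hae, integral_zero]

end AuxSP

/-- If `f(X,Z)` is square-integrable and, conditionally on `Z`, the variables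
`X, X̃^(1), …, X̃^(K)` are i.i.d., then
`E[(f(X,Z) − F^z)²] = ((K+1)/K)·E[(f(X,Z) − f_z(Z))²]`. -/
theorem f_minus_Fz_moment
    {Ω : Type*} [MeasurableSpace Ω] [StandardBorelSpace Ω] [Nonempty Ω]
    (μ : Measure Ω) [IsProbabilityMeasure μ]
    {m : ℕ} (X : Ω → ℝ) (Z : Ω → (Fin m → ℝ)) (hX : Measurable X) (hZ : Measurable Z)
    (f : ℝ → (Fin m → ℝ) → ℝ) (hf : Measurable (Function.uncurry f))
    (hfL2 : MemLp (fun ω => f (X ω) (Z ω)) 2 μ)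
    {K : ℕ} (hK : 1 ≤ K) (Xt : Fin K → Ω → ℝ) (hXt : ∀ k, Measurable (Xt k))
    (hci : iCondIndepFun (MeasurableSpace.comap Z inferInstance) hZ.comap_le
      (Fin.cons (α := fun _ => Ω → ℝ) X Xt) μ)
    (hcd : ∀ k, condDistrib (Xt k) Z μ =ᵐ[μ.map Z] condDistrib X Z μ)
    (Fz : Ω → ℝ) (hFz : ∀ ω, Fz ω = (1 / (K : ℝ)) * ∑ k : Fin K, f (Xt k ω) (Z ω))
    (fz : Ω → ℝ)
    (hfz : fz = μ[fun ω => f (X ω) (Z ω) | MeasurableSpace.comap Z inferInstance]) :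
    ∫ ω, (f (X ω) (Z ω) - Fz ω) ^ 2 ∂μ
      = (((K : ℝ) + 1) / (K : ℝ)) * ∫ ω, (f (X ω) (Z ω) - fz ω) ^ 2 ∂μ := by
  have hK0 : (K:ℝ) ≠ 0 := Nat.cast_ne_zero.mpr (by omega)
  set ν := μ.map Z with hν
  set κ := condDistrib X Z μ with hκ
  set f' : (Fin m → ℝ) × ℝ → ℝ := fun p => f p.2 p.1 with hf'
  have hf'meas : Measurable f' := hf.comp measurable_swap
  have hf'm : StronglyMeasurable f' := hf'meas.stronglyMeasurable
  set h : (Fin m → ℝ) → ℝ := fun z => ∫ x, f' (z, x) ∂(κ z) with hh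
  have hhm : StronglyMeasurable h := hf'm.integral_kernel_prod_right'
  set φ : (Fin m → ℝ) × ℝ → ℝ := fun p => f' p - h p.1 with hφ
  have hφmeas : Measurable φ := hf'meas.sub (hhm.measurable.comp measurable_fst)
  have hφm : StronglyMeasurable φ := hφmeas.stronglyMeasurable
  have hfint : Integrable (fun ω => f (X ω) (Z ω)) μ := hfL2.integrable one_le_two
  have hTX : Measurable fun ω => (Z ω, X ω) := hZ.prodMk hX
  have hmapX : μ.map (fun ω => (Z ω, X ω)) = ν ⊗ₘ κ :=
    (auxSP_compProd_map_condDistrib hX).symm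
  have hmapk : ∀ k, μ.map (fun ω => (Z ω, Xt k ω)) = μ.map (fun ω => (Z ω, X ω)) :=
    fun k => auxSP_map_pair_eq (hXt k) hX (hcd k)
  -- square integrable over the joint law
  have hsqint : Integrable (fun p => (f' p)^2) (ν ⊗ₘ κ) := by
    rw [← hmapX]
    refine (integrable_map_measure (hf'meas.pow_const 2).aestronglyMeasurable
      hTX.aemeasurable).mpr ?_
    exact hfL2.integrable_sq
  have hdisint := (Measure.integrable_compProd_iff
    (hf'meas.pow_const 2).aestronglyMeasurable).mp hsqint
  have hae_int_sq : ∀ᵐ z ∂ν, Integrable (fun x => (f' (z, x))^2) (κ z) := hdisint.1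
  have hint_r : Integrable (fun z => ∫ x, ‖(f' (z, x))^2‖ ∂(κ z)) ν := hdisint.2
  have haeL2 : ∀ᵐ z ∂ν, MemLp (fun x => f' (z, x)) 2 (κ z) := by
    filter_upwards [hae_int_sq] with z hz
    exact (memLp_two_iff_integrable_sq
      (hf'meas.comp measurable_prodMk_left).aestronglyMeasurable).mpr hz
  have haeL1 : ∀ᵐ z ∂ν, Integrable (fun x => f' (z, x)) (κ z) := by
    filter_upwards [haeL2] with z hz
    exact hz.integrable one_le_two
  -- h ∘ Z is in L²
  have hbound : ∀ᵐ z ∂ν, ‖(h z)^2‖ ≤ ∫ x, ‖(f' (z, x))^2‖ ∂(κ z) := by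
    filter_upwards [haeL2] with z hz
    have h1 : (∫ x, f' (z, x) ∂(κ z))^2 ≤ ∫ x, (f' (z, x))^2 ∂(κ z) :=
      auxSP_sq_integral_le (κ z) hz
    have h2 : ∫ x, ‖(f' (z, x))^2‖ ∂(κ z) = ∫ x, (f' (z, x))^2 ∂(κ z) := by
      refine integral_congr_ae (Filter.Eventually.of_forall fun x => ?_)
      simp [Real.norm_eq_abs, abs_pow, sq_abs]
    rw [h2, Real.norm_eq_abs, abs_of_nonneg (sq_nonneg _)]
    exact h1
  have hhZ2 : MemLp (fun ω => h (Z ω)) 2 μ := by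
    refine (memLp_two_iff_integrable_sq
      ((hhm.measurable.comp hZ).aestronglyMeasurable)).mpr ?_
    have hrZ : Integrable (fun ω => ∫ x, ‖(f' (Z ω, x))^2‖ ∂(κ (Z ω))) μ :=
      (integrable_map_measure hint_r.1 hZ.aemeasurable).mp hint_r
    refine Integrable.mono' hrZ
      ((hhm.measurable.comp hZ).pow_const 2).aestronglyMeasurable ?_
    exact ae_of_ae_map hZ.aemeasurable hbound
  -- the centered variables
  set W0 : Ω → ℝ := fun ω => φ (Z ω, X ω) with hW0
  set Wk : Fin K → Ω → ℝ := fun k ω => φ (Z ω, Xt k ω) with hWk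
  have hW0L2 : MemLp W0 2 μ := hfL2.sub hhZ2
  have hWkL2 : ∀ k, MemLp (Wk k) 2 μ := by
    intro k
    have h1 : MemLp φ 2 (μ.map (fun ω => (Z ω, Xt k ω))) := by
      rw [hmapk k]
      exact (memLp_map_measure_iff hφm.aestronglyMeasurable hTX.aemeasurable).mpr hW0L2
    exact (memLp_map_measure_iff hφm.aestronglyMeasurable
      (hZ.prodMk (hXt k)).aemeasurable).mp h1
  -- identification of the conditional expectation
  have hcondX : μ[fun ω => f (X ω) (Z ω)|MeasurableSpace.comap Z inferInstance]
      =ᵐ[μ] fun ω => h (Z ω) :=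
    condExp_prod_ae_eq_integral_condDistrib (μ := μ) hZ hX.aemeasurable hf'm hfint
  have hfzae : fz =ᵐ[μ] fun ω => h (Z ω) := hfz ▸ hcondX
  -- the conditional mean of φ is zero
  have hmean : ∀ᵐ z ∂ν, ∫ x, φ (z, x) ∂(κ z) = 0 := by
    filter_upwards [haeL1] with z hzint
    have he : (fun x => φ (z, x)) = fun x => f' (z, x) - h z := rfl
    calc ∫ x, φ (z, x) ∂(κ z) = ∫ x, (f' (z, x) - h z) ∂(κ z) := by rw [he]
      _ = (∫ x, f' (z, x) ∂(κ z)) - ∫ _x, h z ∂(κ z) :=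
          integral_sub hzint (integrable_const _)
      _ = 0 := by rw [integral_const]; simp; exact sub_self _
  -- cross terms vanish
  have hcross0 : ∀ k, ∫ ω, W0 ω * Wk k ω ∂μ = 0 := by
    intro k
    have hpair : CondIndepFun (MeasurableSpace.comap Z inferInstance) hZ.comap_le X (Xt k) μ := by
      have := hci.condIndepFun (i := 0) (j := k.succ) (Fin.succ_ne_zero k).symm
      simpa using this
    exact auxSP_cross_zero hZ hX (hXt k) hpair (Filter.EventuallyEq.refl _ _) (hcd k) hφm hmean
      (auxSP_L2_mul_integrable hW0L2 (hWkL2 k))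
  have hcrosskj : ∀ k j, k ≠ j → ∫ ω, Wk k ω * Wk j ω ∂μ = 0 := by
    intro k j hkj
    have hpair : CondIndepFun (MeasurableSpace.comap Z inferInstance) hZ.comap_le
        (Xt k) (Xt j) μ := by
      have := hci.condIndepFun (i := k.succ) (j := j.succ)
        (fun hsucc => hkj (Fin.succ_injective _ hsucc))
      simpa using this
    exact auxSP_cross_zero hZ (hXt k) (hXt j) hpair (hcd k) (hcd j) hφm hmean
      (auxSP_L2_mul_integrable (hWkL2 k) (hWkL2 j))
  -- diagonal terms
  have hφ2 : AEStronglyMeasurable (fun p => (φ p)^2)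
      (μ.map (fun ω => (Z ω, X ω))) := (hφmeas.pow_const 2).aestronglyMeasurable
  have hdiag : ∀ k, ∫ ω, (Wk k ω)^2 ∂μ = ∫ ω, (W0 ω)^2 ∂μ := by
    intro k
    calc ∫ ω, (Wk k ω)^2 ∂μ
        = ∫ p, (φ p)^2 ∂(μ.map (fun ω => (Z ω, Xt k ω))) :=
          (integral_map (hZ.prodMk (hXt k)).aemeasurable
            (hφmeas.pow_const 2).aestronglyMeasurable).symm
      _ = ∫ p, (φ p)^2 ∂(μ.map (fun ω => (Z ω, X ω))) := by rw [hmapk k]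
      _ = ∫ ω, (W0 ω)^2 ∂μ := integral_map hTX.aemeasurable hφ2
  -- pointwise expansion
  have hptw : ∀ ω, (f (X ω) (Z ω) - Fz ω)^2
      = W0 ω^2 - (2/(K:ℝ)) * ∑ k, (W0 ω * Wk k ω)
        + (1/(K:ℝ))^2 * ∑ k, ∑ j, (Wk k ω * Wk j ω) := by
    intro ω
    have hlin : f (X ω) (Z ω) - Fz ω = W0 ω - (1/(K:ℝ)) * ∑ k, Wk k ω := by
      rw [hFz ω]
      have hs : ∑ k : Fin K, Wk k ω
          = (∑ k : Fin K, f (Xt k ω) (Z ω)) - (K:ℝ) * h (Z ω) := by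
        rw [show (∑ k : Fin K, Wk k ω) = ∑ k : Fin K, (f (Xt k ω) (Z ω) - h (Z ω)) from rfl,
          Finset.sum_sub_distrib, Finset.sum_const, Finset.card_univ, Fintype.card_fin,
          nsmul_eq_mul]
      rw [hs]
      have hW0ω : W0 ω = f (X ω) (Z ω) - h (Z ω) := rfl
      rw [hW0ω]
      field_simp
      ring
    rw [hlin]
    have hexp : (W0 ω - (1/(K:ℝ)) * ∑ k, Wk k ω)^2
        = W0 ω^2 - (2/(K:ℝ)) * (W0 ω * ∑ k, Wk k ω)
          + (1/(K:ℝ))^2 * ((∑ k, Wk k ω) * ∑ j, Wk j ω) := by ring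
    rw [hexp, Finset.mul_sum, Finset.sum_mul_sum]
  -- integrability of all pieces
  have hintW0sq : Integrable (fun ω => W0 ω^2) μ := hW0L2.integrable_sq
  have hintW0Wk : ∀ k, Integrable (fun ω => W0 ω * Wk k ω) μ :=
    fun k => auxSP_L2_mul_integrable hW0L2 (hWkL2 k)
  have hintWkWj : ∀ k j, Integrable (fun ω => Wk k ω * Wk j ω) μ :=
    fun k j => auxSP_L2_mul_integrable (hWkL2 k) (hWkL2 j)
  have hintsum1 : Integrable (fun ω => ∑ k, (W0 ω * Wk k ω)) μ :=
    integrable_finset_sum _ (fun k _ => hintW0Wk k)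
  have hintsum2 : Integrable (fun ω => ∑ k, ∑ j, (Wk k ω * Wk j ω)) μ :=
    integrable_finset_sum _ (fun k _ => integrable_finset_sum _ (fun j _ => hintWkWj k j))
  set Vr := ∫ ω, (W0 ω)^2 ∂μ with hVr
  have hsum1 : ∫ ω, ∑ k, (W0 ω * Wk k ω) ∂μ = 0 := by
    rw [integral_finset_sum _ (fun k _ => hintW0Wk k)]
    exact Finset.sum_eq_zero fun k _ => hcross0 k
  have hsum2 : ∫ ω, ∑ k, ∑ j, (Wk k ω * Wk j ω) ∂μ = (K:ℝ) * Vr := by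
    rw [integral_finset_sum _ (fun k _ => integrable_finset_sum _ (fun j _ => hintWkWj k j))]
    have : ∀ k : Fin K, ∫ ω, ∑ j, (Wk k ω * Wk j ω) ∂μ = Vr := by
      intro k
      rw [integral_finset_sum _ (fun j _ => hintWkWj k j)]
      rw [Finset.sum_eq_single k]
      · rw [← hdiag k]
        refine integral_congr_ae (Filter.Eventually.of_forall fun ω => ?_)
        ring
      · intro j _ hjk
        exact hcrosskj k j (fun hx => hjk hx.symm)
      · intro hk
        exact absurd (Finset.mem_univ k) hk
    rw [Finset.sum_congr rfl (fun k _ => this k), Finset.sum_const, Finset.card_univ,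
      Fintype.card_fin, nsmul_eq_mul]
  have hLHS : ∫ ω, (f (X ω) (Z ω) - Fz ω) ^ 2 ∂μ = Vr + (1/(K:ℝ)) * Vr := by
    have h1 : ∫ ω, (f (X ω) (Z ω) - Fz ω) ^ 2 ∂μ
        = ∫ ω, (W0 ω^2 - (2/(K:ℝ)) * ∑ k, (W0 ω * Wk k ω)
            + (1/(K:ℝ))^2 * ∑ k, ∑ j, (Wk k ω * Wk j ω)) ∂μ :=
      integral_congr_ae (Filter.Eventually.of_forall fun ω => hptw ω)
    have h2i : Integrable (fun ω => (2/(K:ℝ)) * ∑ k, (W0 ω * Wk k ω)) μ :=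
      hintsum1.const_mul _
    have h3i : Integrable (fun ω => (1/(K:ℝ))^2 * ∑ k, ∑ j, (Wk k ω * Wk j ω)) μ :=
      hintsum2.const_mul _
    have h12 : Integrable (fun ω => W0 ω^2 - (2/(K:ℝ)) * ∑ k, (W0 ω * Wk k ω)) μ :=
      hintW0sq.sub h2i
    rw [h1, integral_add h12 h3i, integral_sub hintW0sq h2i, integral_const_mul,
      integral_const_mul, hsum1, hsum2]
    field_simp
    ring
  have hRHS : ∫ ω, (f (X ω) (Z ω) - fz ω) ^ 2 ∂μ = Vr := by
    refine integral_congr_ae ?_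
    filter_upwards [hfzae] with ω hω
    rw [hω]
  rw [hLHS, hRHS]
  field_simp
end

section
/- Let n ≥ 2, let x_1, …, x_n, z_1, …, z_n, x̃_1, …, x̃_n be given points, and let f* be any real-valued function of the input pairs. Set V̄ := (1/(n−1))·Σ_{i=1}^n (f*(x_i,z_i) − (1/n)Σ_{i'=1}^n f*(x_{i'},z_{i'}))² and assume V̄ ≠ 0. When the floodgate estimators are computed with K = 1 and surrogate f = f* (so M_i = 0 and M_i^z = (1/2)(f*(x_i,z_i) − f*(x̃_i,z_i))² for each i), one has ℓ̂_n(f*) = û_n(f*) = Ŝ, where ℓ̂_n(f*) := (M̄^z − M̄)/V̄, û_n(f*) := M̄^z/V̄ (with M̄^z, M̄ the sample means of {M_i^z}, {M_i}), and Ŝ := [(1/(2n))·Σ_{i=1}^n (f*(x_i,z_i) − f*(x̃_i,z_i))²] / V̄ is the Jansen Sobol' pick-freeze estimator. -/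
theorem sum_eq_one_sub_inv_succ_mul_sum_sq {ι : Type*} [Fintype ι] (K : ℝ) (d Mz : ι → ℝ)
    (hMz : ∀ i, Mz i = d i ^ 2 - 1 / (K + 1) * d i ^ 2) :
    ∑ i, Mz i = (1 - 1 / (K + 1)) * ∑ i, d i ^ 2 := by
  rw [Finset.mul_sum]
  exact Finset.sum_congr rfl fun i _ => by rw [hMz]; ring

theorem floodgate_eq_jansen_when_f_eq_fstar_general
    {β : Type*} (n : ℕ)
    (x : Fin n → ℝ) (z : Fin n → β) (xt : Fin n → ℝ)
    (fstar : ℝ → β → ℝ)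
    (Vbar : ℝ)
    (M Mz : Fin n → ℝ)
    -- per-sample quantities with surrogate `f = f*` and `K = 1`,
    -- so `F_i^z = f*(x̃_i, z_i)`
    (hM : ∀ i, M i = (fstar (x i) (z i) - fstar (x i) (z i)) ^ 2)
    (hMz : ∀ i, Mz i = (fstar (x i) (z i) - fstar (xt i) (z i)) ^ 2
        - (1 / ((1 : ℝ) + 1)) * (fstar (x i) (z i) - fstar (xt i) (z i)) ^ 2) :
    ((((1 / (n : ℝ)) * ∑ i, Mz i) - (1 / (n : ℝ)) * ∑ i, M i) / Vbar
        = ((1 / (2 * (n : ℝ))) * ∑ i, (fstar (x i) (z i) - fstar (xt i) (z i)) ^ 2) / Vbar)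
    ∧ ((1 / (n : ℝ)) * ∑ i, Mz i) / Vbar
        = ((1 / (2 * (n : ℝ))) * ∑ i, (fstar (x i) (z i) - fstar (xt i) (z i)) ^ 2) / Vbar := by
  have hM_sum : ∑ i, M i = 0 := Finset.sum_eq_zero fun i _ => by simp [hM]
  have hMz_mean : (1 / (n : ℝ)) * ∑ i, Mz i
      = (1 / (2 * (n : ℝ))) * ∑ i, (fstar (x i) (z i) - fstar (xt i) (z i)) ^ 2 := by
    rw [sum_eq_one_sub_inv_succ_mul_sum_sq 1 _ Mz hMz]
    ring
  rw [hM_sum, mul_zero, sub_zero, hMz_mean]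
  exact ⟨rfl, rfl⟩

/-- With `K = 1` and surrogate `f = f*`, the floodgate point estimators coincide with the
Jansen Sobol' pick-freeze estimator: `ℓ̂_n(f*) = û_n(f*) = Ŝ`. This is a deterministic
algebraic identity over finite tuples of real numbers. -/
theorem floodgate_eq_jansen_when_f_eq_fstar
    {β : Type*} (n : ℕ) (hn : 2 ≤ n)
    (x : Fin n → ℝ) (z : Fin n → β) (xt : Fin n → ℝ)
    (fstar : ℝ → β → ℝ)
    (Vbar : ℝ)
    (hV : Vbar = (1 / ((n : ℝ) - 1)) *
      ∑ i, (fstar (x i) (z i) - (1 / (n : ℝ)) * ∑ i', fstar (x i') (z i')) ^ 2)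
    (hVne : Vbar ≠ 0)
    (M Mz : Fin n → ℝ)
    -- per-sample quantities with surrogate `f = f*` and `K = 1`,
    -- so `F_i^z = f*(x̃_i, z_i)`
    (hM : ∀ i, M i = (fstar (x i) (z i) - fstar (x i) (z i)) ^ 2)
    (hMz : ∀ i, Mz i = (fstar (x i) (z i) - fstar (xt i) (z i)) ^ 2
        - (1 / ((1 : ℝ) + 1)) * (fstar (x i) (z i) - fstar (xt i) (z i)) ^ 2) :
    ((((1 / (n : ℝ)) * ∑ i, Mz i) - (1 / (n : ℝ)) * ∑ i, M i) / Vbar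
        = ((1 / (2 * (n : ℝ))) * ∑ i, (fstar (x i) (z i) - fstar (xt i) (z i)) ^ 2) / Vbar)
    ∧ ((1 / (n : ℝ)) * ∑ i, Mz i) / Vbar
        = ((1 / (2 * (n : ℝ))) * ∑ i, (fstar (x i) (z i) - fstar (xt i) (z i)) ^ 2) / Vbar :=
  floodgate_eq_jansen_when_f_eq_fstar_general n x z xt fstar Vbar M Mz hM hMz
end
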